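/- Assume P_XY(x,y) > 0 for all (x,y) ∈ 𝒳×𝒴 and that for every θ ∈ (0,1) the map k ↦ T₀(θ,k) on 𝒴 is not constant. Then for every ε ∈ (0,1/2), the limit superior as n → ∞ of the probability that Θ₁ ∉ Δ_n^ε(Y^n) is at most 2ε, where Y^n = (Y_1,…,Y_n) is the source sequence of the construction. -/

import Mathlib

/-!
The pair `(Θₙ, Φₙ)` evolves by a fixed map `G` of the unit square. On the rectangle
`Π⁰ᵢ × Π¹ⱼ` it is affine in each coordinate and maps the rectangle onto `Πᵏᵢ × (0,1)`, where
`k = ξ(i,j)` and `Πᵏ` is the partition of `(0,1)` by the conditional law `P_{X|Y=k}`. Since `ξ`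
pushes `P_X ⊗ P_Z` to `P_XY`, the rectangles sent onto `Πᵏᵢ × (0,1)` have total area
`P_XY(i,k) = P_Y(k) · |Πᵏᵢ|`, so `G` pushes Lebesgue measure on them to `P_Y(k)` times Lebesgue
measure on `Πᵏᵢ × (0,1)`; summing over `i` and `k`, `G` preserves Lebesgue measure on the square.
Hence every `Θₙ` is uniform on `(0,1)`, and since `Θ₁ ∈ Δₙ^ε(Yⁿ)` iff `Θₙ₊₁ ∈ (ε, 1-ε)`, the
event `Θ₁ ∉ Δₙ^ε(Yⁿ)` has probability at most `2ε` for every `n`.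
-/

open MeasureTheory ProbabilityTheory Filter

/-- The left endpoint of the `j`-th partition interval: the cumulative mass of the indices
preceding `j`.  The `j`-th open interval of the partition is `(cum p j, cum p j + p j)`. -/
noncomputable def cum {m : ℕ} (p : Fin m → ℝ) (j : Fin m) : ℝ :=
  ∑ j' ∈ Finset.univ.filter (fun j' => j' < j), p j'

/-- The forward orbit of `θ` under the `θ`-component maps driven by the source word `y`:
`orb T0 y 0 θ = θ` and `orb T0 y (n+1) θ = T0 (orb T0 y n θ) (y n)`.  Thus `orb T0 y n` is
`T0 (·, yₙ) ∘ ⋯ ∘ T0 (·, y₁)`. -/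
def orb {b : ℕ} (T0 : ℝ → Fin b → ℝ) (y : ℕ → Fin b) : ℕ → ℝ → ℝ
  | 0, θ => θ
  | n + 1, θ => T0 (orb T0 y n θ) (y n)

/-- The decoding interval `Δ_n^ε(y^n) = ω_{y₁} ∘ ⋯ ∘ ω_{yₙ} ((ε, 1-ε))` where `ω_k` is the
inverse of the increasing bijection `T0 (·, k) : [0,1] → [0,1]`; equivalently, the set of
`θ ∈ (0,1)` whose `n`-step forward orbit driven by `y` lands in `(ε, 1-ε)`. -/
def delta {b : ℕ} (T0 : ℝ → Fin b → ℝ) (ε : ℝ) (n : ℕ) (y : ℕ → Fin b) : Set ℝ :=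
  {θ ∈ Set.Ioo (0:ℝ) 1 | orb T0 y n θ ∈ Set.Ioo ε (1 - ε)}

open Set Function

/-- The cell `Πᵢ` of the partition of `(0,1)` into consecutive intervals of lengths `p`. -/
def cell {m : ℕ} (p : Fin m → ℝ) (i : Fin m) : Set ℝ :=
  Ioo (cum p i) (cum p i + p i)

theorem measurableSet_cell {m : ℕ} (p : Fin m → ℝ) (i : Fin m) : MeasurableSet (cell p i) :=
  measurableSet_Ioo

section Partition

variable {m : ℕ} {p : Fin m → ℝ}

theorem cum_add_self (p : Fin m → ℝ) (i : Fin m) :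
    cum p i + p i = ∑ j ∈ Finset.univ.filter (· ≤ i), p j := by
  have : Finset.univ.filter (· ≤ i) = insert i (Finset.univ.filter (· < i)) := by
    ext j
    simp [le_iff_lt_or_eq, or_comm]
  rw [this, Finset.sum_insert (by simp), cum, add_comm]

theorem cum_add_self_le_cum (h0 : ∀ i, 0 ≤ p i) {i j : Fin m} (hij : i < j) :
    cum p i + p i ≤ cum p j := by
  rw [cum_add_self, cum]
  refine Finset.sum_le_sum_of_subset_of_nonneg (fun k hk => ?_) fun k _ _ => h0 k
  simp only [Finset.mem_filter, Finset.mem_univ, true_and] at hk ⊢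
  exact hk.trans_lt hij

theorem cell_subset_Ioo (h0 : ∀ i, 0 ≤ p i) (h1 : ∑ j, p j = 1) (i : Fin m) :
    cell p i ⊆ Ioo 0 1 := by
  have hcum : 0 ≤ cum p i := Finset.sum_nonneg fun j _ => h0 j
  have hend : cum p i + p i ≤ 1 :=
    h1 ▸ cum_add_self p i ▸ Finset.sum_le_univ_sum_of_nonneg h0
  exact Ioo_subset_Ioo hcum hend

theorem pairwise_disjoint_cell (h0 : ∀ i, 0 ≤ p i) : Pairwise (Disjoint on cell p) := by
  intro i j hij
  wlog hlt : i < j generalizing i j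
  · exact (this hij.symm (hij.symm.lt_of_le (not_lt.1 hlt))).symm
  exact Ioo_disjoint_Ioo.2 <|
    (min_le_left _ _).trans ((cum_add_self_le_cum h0 hlt).trans (le_max_right _ _))

theorem sum_restrict_cell (h0 : ∀ i, 0 ≤ p i) (h1 : ∑ j, p j = 1) :
    ∑ i, volume.restrict (cell p i) = volume.restrict (Ioo (0 : ℝ) 1) := by
  rw [← Measure.sum_fintype,
    ← Measure.restrict_iUnion (pairwise_disjoint_cell h0) (measurableSet_cell p)]
  refine Measure.restrict_congr_set (ae_eq_of_subset_of_measure_ge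
    (iUnion_subset (cell_subset_Ioo h0 h1)) (le_of_eq ?_)
    (MeasurableSet.iUnion (measurableSet_cell p)).nullMeasurableSet measure_Ioo_lt_top.ne)
  rw [measure_iUnion (pairwise_disjoint_cell h0) (measurableSet_cell p), tsum_fintype]
  simp only [cell, Real.volume_Ioo, add_sub_cancel_left, sub_zero]
  rw [← ENNReal.ofReal_sum_of_nonneg fun i _ => h0 i, h1]

end Partition

theorem volume_restrict_prod (s t : Set ℝ) :
    volume.restrict (s ×ˢ t) = (volume.restrict s).prod (volume.restrict t) := by
  rw [Measure.volume_eq_prod, Measure.prod_restrict]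

theorem sum_restrict_cell_prod {m : ℕ} {p : Fin m → ℝ} (h0 : ∀ i, 0 ≤ p i) (h1 : ∑ i, p i = 1)
    (t : Set ℝ) :
    ∑ i, volume.restrict (cell p i ×ˢ t) = volume.restrict (Ioo (0 : ℝ) 1 ×ˢ t) := by
  simp_rw [volume_restrict_prod, ← sum_restrict_cell h0 h1, ← Measure.sum_fintype,
    Measure.prod_sum_left]

theorem restrict_unitSquare_eq_sum_cell {m n : ℕ} {p : Fin m → ℝ} {r : Fin n → ℝ}
    (hp0 : ∀ i, 0 ≤ p i) (hp1 : ∑ i, p i = 1) (hr0 : ∀ j, 0 ≤ r j) (hr1 : ∑ j, r j = 1) :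
    volume.restrict (Ioo (0 : ℝ) 1 ×ˢ Ioo (0 : ℝ) 1)
      = ∑ q : Fin m × Fin n, volume.restrict (cell p q.1 ×ˢ cell r q.2) := by
  rw [volume_restrict_prod]
  nth_rw 2 [← sum_restrict_cell hr0 hr1]
  rw [← sum_restrict_cell hp0 hp1]
  simp_rw [← Measure.sum_fintype, Measure.prod_sum_left, Measure.prod_sum_right,
    Measure.sum_fintype, Fintype.sum_prod_type, volume_restrict_prod]

theorem map_volume_restrict_Ioo_affine {s : ℝ} (hs : 0 < s) (u v u' : ℝ) :
    Measure.map (fun x => u' + s * (x - u)) (volume.restrict (Ioo u v))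
      = ENNReal.ofReal s⁻¹ • volume.restrict (Ioo u' (u' + s * (v - u))) := by
  have hf : (fun x : ℝ => u' + s * (x - u)) = fun x => s * x + (u' - s * u) := by
    ext x; ring
  have hemb : MeasurableEmbedding (fun x : ℝ => s * x + (u' - s * u)) :=
    (affineHomeomorph s (u' - s * u) hs.ne').measurableEmbedding
  have hvol : Measure.map (fun x : ℝ => s * x + (u' - s * u)) volume
      = ENNReal.ofReal s⁻¹ • volume := by
    rw [show (fun x : ℝ => s * x + (u' - s * u)) = (· + (u' - s * u)) ∘ (s * ·) from rfl,
      ← Measure.map_map (measurable_add_const _) (measurable_const_mul s),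
      Real.map_volume_mul_left hs.ne', Measure.map_smul, map_add_right_eq_self,
      abs_of_pos (inv_pos.2 hs)]
  have hpre : (fun x : ℝ => s * x + (u' - s * u)) ⁻¹' Ioo u' (u' + s * (v - u)) = Ioo u v := by
    ext x
    simp only [mem_preimage, mem_Ioo]
    constructor <;> rintro ⟨h1, h2⟩ <;> constructor <;> nlinarith
  rw [hf, ← hpre, ← hemb.restrict_map, hvol, Measure.restrict_smul]

section Step

variable {a b c : ℕ} (PXY : Fin a × Fin b → ℝ) (PX : Fin a → ℝ) (PY : Fin b → ℝ)
  (PZ : Fin c → ℝ) (ξ : Fin a × Fin c → Fin b)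

/-- The affine piece of `T₀(·, k)` on `cell PX i`; it maps that cell onto the `i`-th cell of
the conditional law `PXY (·, k) / PY k`. -/
noncomputable def thetaStep (i : Fin a) (k : Fin b) (θ : ℝ) : ℝ :=
  cum (fun i' => PXY (i', k) / PY k) i + PXY (i, k) / (PY k * PX i) * (θ - cum PX i)

noncomputable def phiStep (j : Fin c) (φ : ℝ) : ℝ :=
  (PZ j)⁻¹ * (φ - cum PZ j)

/-- The transition `(Θₙ, Φₙ) ↦ (Θₙ₊₁, Φₙ₊₁)`, with `T₀` and `T₁` replaced on each cell by their
affine formulas so that it is measurable. -/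
noncomputable def stepMap (x : ℝ × ℝ) : ℝ × ℝ :=
  ∑ q : Fin a × Fin c, (cell PX q.1 ×ˢ cell PZ q.2).indicator
    (fun y => (thetaStep PXY PX PY q.1 (ξ q) y.1, phiStep PZ q.2 y.2)) x

theorem measurable_thetaStep (i : Fin a) (k : Fin b) : Measurable (thetaStep PXY PX PY i k) :=
  measurable_const.add (measurable_const.mul (measurable_id.sub_const _))

theorem measurable_phiStep (j : Fin c) : Measurable (phiStep PZ j) :=
  measurable_const.mul (measurable_id.sub_const _)

theorem measurable_stepMap : Measurable (stepMap PXY PX PY PZ ξ) :=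
  Finset.measurable_sum _ fun q _ =>
    (((measurable_thetaStep PXY PX PY _ _).comp measurable_fst).prodMk
      ((measurable_phiStep PZ _).comp measurable_snd)).indicator
    ((measurableSet_cell PX q.1).prod (measurableSet_cell PZ q.2))

variable {PXY PX PY PZ}

theorem stepMap_eqOn (hPX0 : ∀ i, 0 ≤ PX i) (hPZ0 : ∀ j, 0 ≤ PZ j) (q : Fin a × Fin c) :
    EqOn (stepMap PXY PX PY PZ ξ)
      (fun y => (thetaStep PXY PX PY q.1 (ξ q) y.1, phiStep PZ q.2 y.2))
      (cell PX q.1 ×ˢ cell PZ q.2) := by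
  intro x hx
  refine (Finset.sum_eq_single_of_mem q (Finset.mem_univ q) fun q' _ hq' => ?_).trans
    (indicator_of_mem hx _)
  refine indicator_of_notMem (fun hx' => ?_) _
  have hdisj : Disjoint (cell PX q'.1 ×ˢ cell PZ q'.2) (cell PX q.1 ×ˢ cell PZ q.2) := by
    rcases eq_or_ne q'.1 q.1 with h1 | h1
    · exact disjoint_prod.2 <| Or.inr <|
        pairwise_disjoint_cell hPZ0 fun h2 => hq' (Prod.ext h1 h2)
    · exact disjoint_prod.2 <| Or.inl <| pairwise_disjoint_cell hPX0 h1
  exact disjoint_left.1 hdisj hx' hx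

theorem stepMap_eq_of_mem (hPX0 : ∀ i, 0 ≤ PX i) (hPZ0 : ∀ j, 0 ≤ PZ j)
    {T0 : ℝ → Fin b → ℝ} {T1 : ℝ → ℝ} {i : Fin a} {j : Fin c} {θ φ : ℝ}
    (hθ : θ ∈ cell PX i) (hφ : φ ∈ cell PZ j)
    (hT0 : T0 θ (ξ (i, j)) = (∑ i' ∈ Finset.univ.filter (fun i' => i' < i), PXY (i', ξ (i, j)))
      / PY (ξ (i, j)) + (θ - cum PX i) * (PXY (i, ξ (i, j)) / (PY (ξ (i, j)) * PX i)))
    (hT1 : T1 φ = (φ - cum PZ j) / PZ j) :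
    stepMap PXY PX PY PZ ξ (θ, φ) = (T0 θ (ξ (i, j)), T1 φ) := by
  rw [stepMap_eqOn ξ hPX0 hPZ0 (i, j) ⟨hθ, hφ⟩, hT0, hT1]
  simp only [thetaStep, phiStep, cum, Finset.sum_div, Prod.mk.injEq]
  constructor <;> ring

theorem map_thetaStep_restrict_cell {i : Fin a} {k : Fin b} (hPX : 0 < PX i) (hPY : 0 < PY k)
    (hPXY : 0 < PXY (i, k)) :
    Measure.map (thetaStep PXY PX PY i k) (volume.restrict (cell PX i))
      = ENNReal.ofReal (PY k * PX i / PXY (i, k))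
        • volume.restrict (cell (fun i' => PXY (i', k) / PY k) i) := by
  have h := map_volume_restrict_Ioo_affine (div_pos hPXY (mul_pos hPY hPX))
    (cum PX i) (cum PX i + PX i) (cum (fun i' => PXY (i', k) / PY k) i)
  have hlen : PXY (i, k) / (PY k * PX i) * PX i = PXY (i, k) / PY k := by
    field_simp
  rw [inv_div, add_sub_cancel_left, hlen] at h
  exact h

theorem map_phiStep_restrict_cell {j : Fin c} (hPZ : 0 ≤ PZ j) :
    Measure.map (phiStep PZ j) (volume.restrict (cell PZ j))
      = ENNReal.ofReal (PZ j) • volume.restrict (Ioo 0 1) := by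
  rcases hPZ.eq_or_lt with h0 | hpos
  · simp [cell, ← h0]
  have h := map_volume_restrict_Ioo_affine (inv_pos.2 hpos) (cum PZ j) (cum PZ j + PZ j) 0
  simp only [zero_add, inv_inv, add_sub_cancel_left, inv_mul_cancel₀ hpos.ne'] at h
  exact h

theorem map_restrict_cell_prod {i : Fin a} {j : Fin c} {k : Fin b} (hPX : 0 < PX i)
    (hPY : 0 < PY k) (hPXY : 0 < PXY (i, k)) (hPZ : 0 ≤ PZ j) :
    Measure.map (fun y => (thetaStep PXY PX PY i k y.1, phiStep PZ j y.2))
        (volume.restrict (cell PX i ×ˢ cell PZ j))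
      = ENNReal.ofReal (PY k * PX i / PXY (i, k) * PZ j)
        • volume.restrict (cell (fun i' => PXY (i', k) / PY k) i ×ˢ Ioo 0 1) := by
  rw [volume_restrict_prod, volume_restrict_prod,
    show (fun y : ℝ × ℝ => (thetaStep PXY PX PY i k y.1, phiStep PZ j y.2))
      = Prod.map (thetaStep PXY PX PY i k) (phiStep PZ j) from rfl,
    ← Measure.map_prod_map _ _ (measurable_thetaStep PXY PX PY i k) (measurable_phiStep PZ j),
    map_thetaStep_restrict_cell hPX hPY hPXY, map_phiStep_restrict_cell hPZ,
    Measure.prod_smul_left, Measure.prod_smul_right, smul_smul,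
    ← ENNReal.ofReal_mul (by positivity)]

theorem map_stepMap_unitSquare (hpos : ∀ q, 0 < PXY q) (hPXpos : ∀ i, 0 < PX i)
    (hPXsum : ∑ i, PX i = 1) (hPYpos : ∀ k, 0 < PY k) (hPY : ∀ k, PY k = ∑ i, PXY (i, k))
    (hPYsum : ∑ k, PY k = 1) (hPZ0 : ∀ j, 0 ≤ PZ j) (hPZ1 : ∑ j, PZ j = 1)
    (hξ : ∀ i k, ∑ j ∈ Finset.univ.filter (fun j => ξ (i, j) = k), PX i * PZ j = PXY (i, k)) :
    Measure.map (stepMap PXY PX PY PZ ξ) (volume.restrict (Ioo (0 : ℝ) 1 ×ˢ Ioo (0 : ℝ) 1))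
      = volume.restrict (Ioo (0 : ℝ) 1 ×ˢ Ioo (0 : ℝ) 1) := by
  have hPX0 : ∀ i, 0 ≤ PX i := fun i => (hPXpos i).le
  have hcond0 : ∀ k i, 0 ≤ PXY (i, k) / PY k := fun k i => div_nonneg (hpos _).le (hPYpos k).le
  have hcond1 : ∀ k, ∑ i, PXY (i, k) / PY k = 1 := fun k => by
    rw [← Finset.sum_div, ← hPY, div_self (hPYpos k).ne']
  -- the cells of `X = i` sent to the same `Y = k` carry mass `P(X = i, Y = k)` in total
  have hfiber : ∀ i k, ∑ j ∈ Finset.univ.filter (fun j => ξ (i, j) = k),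
      ENNReal.ofReal (PY k * PX i / PXY (i, k) * PZ j) = ENNReal.ofReal (PY k) := by
    intro i k
    have h := hξ i k
    rw [← Finset.mul_sum] at h
    rw [← ENNReal.ofReal_sum_of_nonneg fun j _ =>
        mul_nonneg (div_nonneg (mul_pos (hPYpos k) (hPXpos i)).le (hpos _).le) (hPZ0 j),
      ← Finset.mul_sum, div_mul_eq_mul_div, mul_assoc, h, mul_div_cancel_right₀ _ (hpos _).ne']
  calc Measure.map (stepMap PXY PX PY PZ ξ) (volume.restrict (Ioo 0 1 ×ˢ Ioo 0 1))
      = ∑ q : Fin a × Fin c, ENNReal.ofReal (PY (ξ q) * PX q.1 / PXY (q.1, ξ q) * PZ q.2)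
          • volume.restrict (cell (fun i' => PXY (i', ξ q) / PY (ξ q)) q.1 ×ˢ Ioo 0 1) := by
        rw [restrict_unitSquare_eq_sum_cell hPX0 hPXsum hPZ0 hPZ1,
          Measure.map_finset_sum' (measurable_stepMap PXY PX PY PZ ξ).aemeasurable]
        refine Finset.sum_congr rfl fun q _ => ?_
        rw [Measure.map_congr (eventuallyEq_of_mem (self_mem_ae_restrict
            ((measurableSet_cell PX q.1).prod (measurableSet_cell PZ q.2)))
            (stepMap_eqOn ξ hPX0 hPZ0 q)),
          map_restrict_cell_prod (hPXpos _) (hPYpos _) (hpos _) (hPZ0 _)]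
    _ = ∑ i, ∑ k, ENNReal.ofReal (PY k)
          • volume.restrict (cell (fun i' => PXY (i', k) / PY k) i ×ˢ Ioo 0 1) := by
        rw [Fintype.sum_prod_type]
        refine Finset.sum_congr rfl fun i _ => ?_
        rw [← Finset.sum_fiberwise Finset.univ (fun j => ξ (i, j))]
        refine Finset.sum_congr rfl fun k _ => ?_
        rw [Finset.sum_congr rfl fun j hj => by rw [(Finset.mem_filter.1 hj).2]]
        dsimp only
        rw [← Finset.sum_smul, hfiber]
    _ = ∑ k, ENNReal.ofReal (PY k) • volume.restrict (Ioo (0 : ℝ) 1 ×ˢ Ioo (0 : ℝ) 1) := by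
        rw [Finset.sum_comm]
        refine Finset.sum_congr rfl fun k _ => ?_
        rw [← Finset.smul_sum, sum_restrict_cell_prod (hcond0 k) (hcond1 k)]
    _ = volume.restrict (Ioo 0 1 ×ˢ Ioo 0 1) := by
        rw [← Finset.sum_smul, ← ENNReal.ofReal_sum_of_nonneg fun k _ => (hPYpos k).le, hPYsum,
          ENNReal.ofReal_one, one_smul]

end Step

section Iteration

variable {Ω : Type*} [MeasurableSpace Ω] {P : Measure Ω}

theorem map_eq_of_ae_eq_comp {α : Type*} [MeasurableSpace α] {μ : Measure α} {G : α → α}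
    (hG : Measurable G) (hGμ : Measure.map G μ = μ) {V : ℕ → Ω → α}
    (hV : ∀ n, Measurable (V n)) (h0 : Measure.map (V 0) P = μ)
    (hrec : ∀ n, V (n + 1) =ᵐ[P] G ∘ V n) (n : ℕ) :
    Measure.map (V n) P = μ := by
  induction n with
  | zero => exact h0
  | succ n ih => rw [Measure.map_congr (hrec n), ← Measure.map_map hG (hV n), ih, hGμ]

variable {b : ℕ} {T0 : ℝ → Fin b → ℝ} {Θ : ℕ → Ω → ℝ} {Y : ℕ → Ω → Fin b}

theorem ae_orb_eq (hrec : ∀ n, ∀ᵐ ω ∂P, Θ (n + 1) ω = T0 (Θ n ω) (Y n ω)) (n : ℕ) :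
    ∀ᵐ ω ∂P, orb T0 (fun l => Y l ω) n (Θ 0 ω) = Θ n ω := by
  induction n with
  | zero => exact Eventually.of_forall fun ω => rfl
  | succ n ih =>
    filter_upwards [ih, hrec n] with ω h1 h2
    rw [orb, h1, h2]

theorem ae_mem_delta_iff (h0 : ∀ᵐ ω ∂P, Θ 0 ω ∈ Ioo 0 1)
    (hrec : ∀ n, ∀ᵐ ω ∂P, Θ (n + 1) ω = T0 (Θ n ω) (Y n ω)) (ε : ℝ) (n : ℕ) :
    ∀ᵐ ω ∂P, Θ 0 ω ∈ delta T0 ε n (fun l => Y l ω) ↔ Θ n ω ∈ Ioo ε (1 - ε) := by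
  filter_upwards [h0, ae_orb_eq hrec n] with ω hΘ0 horb
  rw [delta, mem_sep_iff, horb, and_iff_right hΘ0]

end Iteration

theorem volume_compl_Ioo_inter_Ioo_le {ε : ℝ} (hε : 0 ≤ ε) :
    volume ((Ioo ε (1 - ε))ᶜ ∩ Ioo 0 1) ≤ ENNReal.ofReal (2 * ε) := by
  have hsub : (Ioo ε (1 - ε))ᶜ ∩ Ioo 0 1 ⊆ Ioc 0 ε ∪ Ico (1 - ε) 1 := by
    rintro x ⟨hx, hx01⟩
    rw [mem_compl_iff, mem_Ioo, not_and_or, not_lt, not_lt] at hx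
    exact hx.imp (fun h => ⟨hx01.1, h⟩) fun h => ⟨h, hx01.2⟩
  calc volume ((Ioo ε (1 - ε))ᶜ ∩ Ioo 0 1)
      ≤ volume (Ioc 0 ε) + volume (Ico (1 - ε) 1) :=
        (measure_mono hsub).trans (measure_union_le _ _)
    _ = ENNReal.ofReal (2 * ε) := by
      rw [Real.volume_Ioc, Real.volume_Ico, ← ENNReal.ofReal_add (by linarith) (by linarith)]
      ring_nf

/-- Indices are 0-based: `Θ 0` is the paper's `Θ₁`. -/
theorem stmt_8_general
    {Ω : Type*} [MeasurableSpace Ω] (P : Measure Ω) [IsProbabilityMeasure P]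
    {a b c : ℕ}
    (PXY : Fin a × Fin b → ℝ)
    (hPXY1 : ∑ q : Fin a × Fin b, PXY q = 1)
    (PX : Fin a → ℝ) (hPX : ∀ i, PX i = ∑ k, PXY (i, k))
    (PY : Fin b → ℝ) (hPY : ∀ k, PY k = ∑ i, PXY (i, k))
    (PZ : Fin c → ℝ) (hPZ0 : ∀ j, 0 ≤ PZ j) (hPZ1 : ∑ j, PZ j = 1)
    (ξ : Fin a × Fin c → Fin b)
    (hξ : ∀ i k, ∑ j ∈ Finset.univ.filter (fun j => ξ (i, j) = k), PX i * PZ j = PXY (i, k))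
    (T0 : ℝ → Fin b → ℝ)
    (hT0 : ∀ (k : Fin b) (i : Fin a), 0 < PX i →
      ∀ θ ∈ Set.Icc (cum PX i) (cum PX i + PX i),
        T0 θ k = (∑ i' ∈ Finset.univ.filter (fun i' => i' < i), PXY (i', k)) / PY k
          + (θ - cum PX i) * (PXY (i, k) / (PY k * PX i)))
    (T1 : ℝ → ℝ)
    (hT1 : ∀ j : Fin c, ∀ φ ∈ Set.Ioo (cum PZ j) (cum PZ j + PZ j),
      T1 φ = (φ - cum PZ j) / PZ j)
    (Θ Φ : ℕ → Ω → ℝ) (X : ℕ → Ω → Fin a) (Z : ℕ → Ω → Fin c) (Y : ℕ → Ω → Fin b)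
    (hΘm : ∀ n, Measurable (Θ n)) (hΦm : ∀ n, Measurable (Φ n))
    (hinit : Measure.map (fun ω => (Θ 0 ω, Φ 0 ω)) P
      = volume.restrict (Set.Ioo (0:ℝ) 1 ×ˢ Set.Ioo (0:ℝ) 1))
    (hXdef : ∀ n, ∀ᵐ ω ∂P, Θ n ω ∈ Set.Ioo (cum PX (X n ω)) (cum PX (X n ω) + PX (X n ω)))
    (hZdef : ∀ n, ∀ᵐ ω ∂P, Φ n ω ∈ Set.Ioo (cum PZ (Z n ω)) (cum PZ (Z n ω) + PZ (Z n ω)))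
    (hYdef : ∀ n ω, Y n ω = ξ (X n ω, Z n ω))
    (hΘrec : ∀ n, ∀ᵐ ω ∂P, Θ (n + 1) ω = T0 (Θ n ω) (Y n ω))
    (hΦrec : ∀ n, ∀ᵐ ω ∂P, Φ (n + 1) ω = T1 (Φ n ω))
    (hpos : ∀ q : Fin a × Fin b, 0 < PXY q)
    :
    ∀ ε ∈ Set.Ioo (0:ℝ) (1/2 : ℝ),
      Filter.limsup (fun n : ℕ => P {ω | Θ 0 ω ∉ delta T0 ε n (fun l => Y l ω)}) atTop
        ≤ ENNReal.ofReal (2 * ε) := by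
  intro ε hε
  obtain ⟨i₀, k₀⟩ : Nonempty (Fin a × Fin b) :=
    Finset.univ_nonempty_iff.1 (Finset.nonempty_of_sum_ne_zero (hPXY1 ▸ one_ne_zero))
  have hPXpos : ∀ i, 0 < PX i := fun i =>
    hPX i ▸ Finset.sum_pos (fun k _ => hpos _) ⟨k₀, Finset.mem_univ _⟩
  have hPYpos : ∀ k, 0 < PY k := fun k =>
    hPY k ▸ Finset.sum_pos (fun i _ => hpos _) ⟨i₀, Finset.mem_univ _⟩
  have hPXsum : ∑ i, PX i = 1 := by simp only [hPX, ← hPXY1, Fintype.sum_prod_type]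
  have hPYsum : ∑ k, PY k = 1 := by simp only [hPY, ← hPXY1, Fintype.sum_prod_type_right]
  have hPX0 : ∀ i, 0 ≤ PX i := fun i => (hPXpos i).le
  have hstep : ∀ n, (fun ω => (Θ (n + 1) ω, Φ (n + 1) ω))
      =ᵐ[P] stepMap PXY PX PY PZ ξ ∘ fun ω => (Θ n ω, Φ n ω) := fun n => by
    filter_upwards [hXdef n, hZdef n, hΘrec n, hΦrec n] with ω hX hZ hΘ hΦ
    rw [Function.comp_apply, stepMap_eq_of_mem ξ hPX0 hPZ0 hX hZ
      (hT0 _ _ (hPXpos _) _ (Ioo_subset_Icc_self hX)) (hT1 _ _ hZ), hΘ, hΦ, hYdef]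
  have hlaw : ∀ n, Measure.map (Θ n) P = volume.restrict (Ioo 0 1) := fun n => by
    rw [show Θ n = Prod.fst ∘ fun ω => (Θ n ω, Φ n ω) from rfl,
      ← Measure.map_map measurable_fst ((hΘm n).prodMk (hΦm n)),
      map_eq_of_ae_eq_comp (measurable_stepMap PXY PX PY PZ ξ)
        (map_stepMap_unitSquare ξ hpos hPXpos hPXsum hPYpos hPY hPYsum hPZ0 hPZ1 hξ)
        (fun n => (hΘm n).prodMk (hΦm n)) hinit hstep n,
      volume_restrict_prod, Measure.map_fst_prod]
    simp
  have hΘ0 : ∀ᵐ ω ∂P, Θ 0 ω ∈ Ioo 0 1 :=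
    (hXdef 0).mono fun ω h => cell_subset_Ioo hPX0 hPXsum _ h
  refine limsup_le_of_le (by isBoundedDefault) (Eventually.of_forall fun n => ?_)
  calc P {ω | Θ 0 ω ∉ delta T0 ε n (fun l => Y l ω)}
      = P (Θ n ⁻¹' (Ioo ε (1 - ε))ᶜ) := measure_congr <| eventuallyEq_set.2 <|
        (ae_mem_delta_iff hΘ0 hΘrec ε n).mono fun ω h => not_congr h
    _ = volume ((Ioo ε (1 - ε))ᶜ ∩ Ioo 0 1) := by
      rw [← Measure.map_apply (hΘm n) measurableSet_Ioo.compl, hlaw,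
        Measure.restrict_apply measurableSet_Ioo.compl]
    _ ≤ ENNReal.ofReal (2 * ε) := volume_compl_Ioo_inter_Ioo_le hε.1.le

/-- Theorem 1(b) of the paper (adapted from the posterior matching analysis): if `PXY` is
strictly positive and `T0 (θ, ·)` is never constant, then for every `ε ∈ (0, 1/2)`,
`limsup_n P(Θ₁ ∉ Δ_n^ε(Y^n)) ≤ 2ε`.  (Indices are 0-based: `Θ 0` is the paper's `Θ₁`.) -/
theorem stmt_8
    {Ω : Type*} [MeasurableSpace Ω] (P : Measure Ω) [IsProbabilityMeasure P]
    {a b c : ℕ}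
    (PXY : Fin a × Fin b → ℝ)
    (hPXY0 : ∀ q, 0 ≤ PXY q) (hPXY1 : ∑ q : Fin a × Fin b, PXY q = 1)
    (PX : Fin a → ℝ) (hPX : ∀ i, PX i = ∑ k, PXY (i, k))
    (PY : Fin b → ℝ) (hPY : ∀ k, PY k = ∑ i, PXY (i, k))
    (PZ : Fin c → ℝ) (hPZ0 : ∀ j, 0 ≤ PZ j) (hPZ1 : ∑ j, PZ j = 1)
    (ξ : Fin a × Fin c → Fin b)
    (hξ : ∀ i k, ∑ j ∈ Finset.univ.filter (fun j => ξ (i, j) = k), PX i * PZ j = PXY (i, k))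
    (T0 : ℝ → Fin b → ℝ)
    (hT0 : ∀ (k : Fin b) (i : Fin a), 0 < PX i →
      ∀ θ ∈ Set.Icc (cum PX i) (cum PX i + PX i),
        T0 θ k = (∑ i' ∈ Finset.univ.filter (fun i' => i' < i), PXY (i', k)) / PY k
          + (θ - cum PX i) * (PXY (i, k) / (PY k * PX i)))
    (T1 : ℝ → ℝ)
    (hT1 : ∀ j : Fin c, ∀ φ ∈ Set.Ioo (cum PZ j) (cum PZ j + PZ j),
      T1 φ = (φ - cum PZ j) / PZ j)
    (Θ Φ : ℕ → Ω → ℝ) (X : ℕ → Ω → Fin a) (Z : ℕ → Ω → Fin c) (Y : ℕ → Ω → Fin b)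
    (hΘm : ∀ n, Measurable (Θ n)) (hΦm : ∀ n, Measurable (Φ n))
    (hXm : ∀ n, Measurable (X n)) (hZm : ∀ n, Measurable (Z n))
    (hinit : Measure.map (fun ω => (Θ 0 ω, Φ 0 ω)) P
      = volume.restrict (Set.Ioo (0:ℝ) 1 ×ˢ Set.Ioo (0:ℝ) 1))
    (hXdef : ∀ n, ∀ᵐ ω ∂P, Θ n ω ∈ Set.Ioo (cum PX (X n ω)) (cum PX (X n ω) + PX (X n ω)))
    (hZdef : ∀ n, ∀ᵐ ω ∂P, Φ n ω ∈ Set.Ioo (cum PZ (Z n ω)) (cum PZ (Z n ω) + PZ (Z n ω)))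
    (hYdef : ∀ n ω, Y n ω = ξ (X n ω, Z n ω))
    (hΘrec : ∀ n, ∀ᵐ ω ∂P, Θ (n + 1) ω = T0 (Θ n ω) (Y n ω))
    (hΦrec : ∀ n, ∀ᵐ ω ∂P, Φ (n + 1) ω = T1 (Φ n ω))
    (hpos : ∀ q : Fin a × Fin b, 0 < PXY q)
    (hnc : ∀ θ ∈ Set.Ioo (0:ℝ) 1, ∃ k k' : Fin b, T0 θ k ≠ T0 θ k')
    :
    ∀ ε ∈ Set.Ioo (0:ℝ) (1/2 : ℝ),
      Filter.limsup (fun n : ℕ => P {ω | Θ 0 ω ∉ delta T0 ε n (fun l => Y l ω)}) atTop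
        ≤ ENNReal.ofReal (2 * ε) :=
  stmt_8_general P PXY hPXY1 PX hPX PY hPY PZ hPZ0 hPZ1 ξ hξ T0 hT0 T1 hT1 Θ Φ X Z Y hΘm hΦm hinit
    hXdef hZdef hYdef hΘrec hΦrec hpos
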